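/- arXiv:2511.16409 — 2 statements merged into one kernel-verified Lean document; each statement's English description precedes it below -/
import Mathlib

section
/- Let 1 → N → G → Q → 1 be a group extension, i.e., let p : G → Q be a surjective group homomorphism with kernel N. If every finitely generated subgroup of Q is finitely presented, and every subgroup of N is finitely presented, then every finitely generated subgroup of G is finitely presented. (This is the case (n,m) = (1,2) of part (i) of the extension inheritance lemma: if Q is coherent and N is (0,2)-coherent, then G is coherent.) -/
/-!
Finite presentability passes to extensions. If `N ⊴ G` is finitely presented with finite
generating set `S`, and `G ⧸ N` is presented by a free group `F` on finitely many generators `T`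
with finitely many relators, lift `F → G ⧸ N` to `γ : F → G`. Then `G` is the quotient of `N ∗ F`
by finitely many relators: each relator `r` of `G ⧸ N` is identified with `γ r ∈ N`, and
`t s t⁻¹ = γ t * s * (γ t)⁻¹` for `t ∈ T`, `s ∈ S`. Modulo these every element has the form
`n * w` with `n ∈ N`, `w ∈ F`, and from this normal form the induced map to `G` is injective.
A finitely generated `H ≤ G` is an extension of the finitely generated `p H ≤ Q` by
`H ∩ ker p`, which is isomorphic to a subgroup of `N`.
-/
/-- A group is finitely presented if it admits a presentation with finitely many
generators and finitely many relations. -/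
def Group.FinitelyPresented (G : Type*) [Group G] : Prop :=
  ∃ (n : ℕ) (rels : Finset (FreeGroup (Fin n))),
    Nonempty (G ≃* PresentedGroup (rels : Set (FreeGroup (Fin n))))

open Subgroup Monoid Coprod

section

variable {G F : Type*} [Group G] [Group F] {N : Subgroup G} [N.Normal] (γ : F →* G)
  (S : Set N) (T : Set F) (R : Set (N.comap γ))

def extensionRelators : Set (N ∗ F) :=
  Set.range (fun r : R => inr (r : F) * (inl (γ.subgroupComap N r))⁻¹) ∪
    Set.range (fun ts : T × S => inr (ts.1 : F) * inl (ts.2 : N) * (inr (ts.1 : F))⁻¹ *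
      (inl (MulAut.conjNormal (γ ts.1) ts.2))⁻¹)

theorem extensionRelators.finite (hS : S.Finite) (hT : T.Finite) (hR : R.Finite) :
    (extensionRelators γ S T R).Finite := by
  have := hS.to_subtype; have := hT.to_subtype; have := hR.to_subtype
  exact (Set.finite_range _).union (Set.finite_range _)

theorem extensionRelators.subset_ker :
    extensionRelators γ S T R ⊆ (lift N.subtype γ).ker := by
  rintro _ (⟨r, rfl⟩ | ⟨⟨t, s⟩, rfl⟩)
  · exact mul_inv_cancel (γ r)
  · simp [MonoidHom.mem_ker]

end

namespace extensionRelators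

variable {G F : Type*} [Group G] [Group F] {N : Subgroup G} [N.Normal] {γ : F →* G}
  {S : Set N} {T : Set F} {R : Set (N.comap γ)}

local notation "π" => QuotientGroup.mk' (normalClosure (extensionRelators γ S T R))

theorem mk_inr_mul_mk_inl (hS : closure S = ⊤) (hT : closure T = ⊤) (w : F) (n : N) :
    π (inr w) * π (inl n) = π (inl (MulAut.conjNormal (γ w) n)) * π (inr w) := by
  rw [← mul_inv_eq_iff_eq_mul]
  revert n
  have hT' : w ∈ closure T := hT ▸ mem_top w
  induction hT' using Subgroup.closure_induction with
  | mem t ht =>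
    have := MonoidHom.eq_of_eqOn_dense hS
      (f := (MulAut.conj (π (inr t))).toMonoidHom.comp ((π).comp inl))
      (g := ((π).comp inl).comp (MulAut.conjNormal (γ t)).toMonoidHom) fun s hs => by
        have hrel := (QuotientGroup.eq_one_iff _).2
          (subset_normalClosure (Or.inr ⟨(⟨t, ht⟩, ⟨s, hs⟩), rfl⟩) :
            inr t * inl s * (inr t)⁻¹ * (inl (MulAut.conjNormal (γ t) s))⁻¹ ∈
              normalClosure (extensionRelators γ S T R))
        simpa [mul_inv_eq_one] using hrel
    exact DFunLike.congr_fun this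
  | one => simp
  | mul w₁ w₂ _ _ h₁ h₂ =>
    intro n
    simp only [map_mul, MulAut.mul_apply, ← h₁, ← h₂]
    group
  | inv w _ h =>
    intro n
    have := h (MulAut.conjNormal (γ w⁻¹) n)
    simp only [map_inv, MulAut.inv_apply, MulEquiv.apply_symm_apply] at this ⊢
    rw [← this]
    group

theorem exists_mk_inl_mul_mk_inr (hS : closure S = ⊤) (hT : closure T = ⊤) (x : N ∗ F) :
    ∃ n w, π (inl n) * π (inr w) = π x := by
  induction x using Coprod.induction_on with
  | inl n => exact ⟨n, 1, by simp⟩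
  | inr w => exact ⟨1, w, by simp⟩
  | mul x y hx hy =>
    obtain ⟨n₁, w₁, hx⟩ := hx
    obtain ⟨n₂, w₂, hy⟩ := hy
    refine ⟨n₁ * MulAut.conjNormal (γ w₁) n₂, w₁ * w₂, ?_⟩
    simp only [map_mul]
    rw [← hx, ← hy]
    conv_rhs => rw [mul_assoc, ← mul_assoc (π (inr w₁)), mk_inr_mul_mk_inl hS hT]
    group

theorem exists_mk_inl_eq_mk_inr (hS : closure S = ⊤) (hT : closure T = ⊤)
    (hR : normalClosure (((↑) : N.comap γ → F) '' R) = N.comap γ) {w : F} (hw : w ∈ N.comap γ) :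
    ∃ n, π (inl n) = π (inr w) := by
  let L : Subgroup F := ((π).comp inl).range.comap ((π).comp inr)
  have hL : L.Normal := ⟨fun w ⟨n, hn⟩ f => ⟨MulAut.conjNormal (γ f) n, by
    simp only [MonoidHom.comp_apply, map_mul, map_inv] at hn ⊢
    rw [← hn, mk_inr_mul_mk_inl hS hT, mul_inv_cancel_right]⟩⟩
  have hRL : ((↑) : N.comap γ → F) '' R ⊆ L := by
    rintro _ ⟨r, hr, rfl⟩
    refine ⟨γ.subgroupComap N r, ?_⟩
    have hrel : π (inr (r : F)) * (π (inl (γ.subgroupComap N r)))⁻¹ = 1 := by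
      rw [← map_inv, ← map_mul]
      exact (QuotientGroup.eq_one_iff _).2 (subset_normalClosure (Or.inl ⟨⟨r, hr⟩, rfl⟩))
    exact (mul_inv_eq_one.1 hrel).symm
  exact normalClosure_le_normal hRL (hR.ge hw)

theorem ker_lift_eq_normalClosure (hS : closure S = ⊤) (hT : closure T = ⊤)
    (hR : normalClosure (((↑) : N.comap γ → F) '' R) = N.comap γ) :
    (lift N.subtype γ).ker = normalClosure (extensionRelators γ S T R) := by
  have hle := normalClosure_le_normal (subset_ker γ S T R)
  refine le_antisymm (fun x hx => ?_) hle
  let φ := QuotientGroup.lift _ (lift N.subtype γ) hle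
  have hφ : ∀ x, φ (π x) = lift N.subtype γ x := fun _ => rfl
  obtain ⟨n, w, hnw⟩ := exists_mk_inl_mul_mk_inr hS hT x
  have hw : w ∈ N.comap γ := by
    have := congrArg φ hnw
    simp only [map_mul, hφ, lift_apply_inl, lift_apply_inr, N.coe_subtype,
      MonoidHom.mem_ker.1 hx] at this
    rw [Subgroup.mem_comap, eq_inv_of_mul_eq_one_right this]
    exact N.inv_mem n.2
  obtain ⟨n', hn'⟩ := exists_mk_inl_eq_mk_inr hS hT hR hw
  rw [← hn', ← map_mul] at hnw
  have : n * n' = 1 := by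
    have := congrArg φ hnw
    simp only [hφ, map_mul, lift_apply_inl, N.coe_subtype, MonoidHom.mem_ker.1 hx] at this
    exact Subtype.ext this
  rw [← QuotientGroup.eq_one_iff, ← QuotientGroup.mk'_apply, ← hnw, ← map_mul inl, this, map_one,
    map_one]

end extensionRelators

namespace Group.IsFinitelyPresented

theorem fg {G : Type*} [Group G] [h : IsFinitelyPresented G] : Group.FG G :=
  let ⟨_, _, hφ, _⟩ := h.out
  Group.fg_of_surjective hφ

theorem of_ker_of_surjective {G K : Type*} [Group G] [Group K] (e : G →* K)
    (he : Function.Surjective e) [IsFinitelyPresented e.ker] [hK : IsFinitelyPresented K] :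
    IsFinitelyPresented G := by
  obtain ⟨S, hS, hSfin⟩ := Group.fg_iff.1 (fg : Group.FG e.ker)
  obtain ⟨n, φ, hφ, Rel, hRelfin, hRel⟩ := hK.out
  let γ : FreeGroup (Fin n) →* G := FreeGroup.lift fun j => Function.surjInv he (φ (.of j))
  have hγ : e.comp γ = φ := FreeGroup.ext_hom _ _ fun j => by
    simp [γ, Function.surjInv_eq he]
  have hcomap : e.ker.comap γ = φ.ker := by rw [MonoidHom.comap_ker, hγ]
  have hR : normalClosure (((↑) : e.ker.comap γ → _) '' ((↑) ⁻¹' Rel)) = e.ker.comap γ := by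
    refine (congrArg normalClosure (Set.image_preimage_eq_of_subset fun r hr => ?_)).trans ?_
    · exact ⟨⟨r, hcomap ▸ hRel ▸ subset_normalClosure hr⟩, rfl⟩
    · rw [hRel, hcomap]
  have hsurj : Function.Surjective (lift e.ker.subtype γ) := fun g => by
    obtain ⟨w, hw⟩ := hφ (e g)
    refine ⟨inl ⟨g * (γ w)⁻¹, ?_⟩ * inr w, by simp⟩
    rw [MonoidHom.mem_ker, map_mul, map_inv, ← MonoidHom.comp_apply, hγ, hw, mul_inv_cancel]
  refine of_surjective _ hsurj ⟨extensionRelators γ S (Set.range FreeGroup.of) ((↑) ⁻¹' Rel),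
    extensionRelators.finite γ S _ _ hSfin (Set.finite_range _)
      (hRelfin.preimage Subtype.val_injective.injOn), ?_⟩
  exact (extensionRelators.ker_lift_eq_normalClosure hS (FreeGroup.closure_range_of _) hR).symm

end Group.IsFinitelyPresented

theorem Group.finitelyPresented_iff_isFinitelyPresented {G : Type*} [Group G] :
    Group.FinitelyPresented G ↔ Group.IsFinitelyPresented G := by
  constructor
  · rintro ⟨n, rels, ⟨i⟩⟩
    exact .equiv i.symm
  · intro h
    obtain ⟨n, s, hs, ⟨i⟩⟩ := Group.IsFinitelyPresented.exists_mulEquiv_presentedGroup (G := G)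
    exact ⟨n, hs.toFinset, ⟨by rwa [Set.Finite.coe_toFinset]⟩⟩

theorem Group.IsFinitelyPresented.of_injective {G N : Type*} [Group G] [Group N] {f : G →* N}
    (hf : Function.Injective f) (hN : ∀ K : Subgroup N, Group.IsFinitelyPresented K) :
    Group.IsFinitelyPresented G :=
  have := hN f.range
  .equiv (MonoidHom.ofInjective hf).symm

theorem coherent_of_group_extension_general {G Q : Type*} [Group G] [Group Q]
    (p : G →* Q) (N : Subgroup G) (hN : N = p.ker)
    (hQ : ∀ K : Subgroup Q, K.FG → Group.FinitelyPresented K)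
    (hNcoh : ∀ K : Subgroup ↥N, Group.FinitelyPresented K) :
    ∀ H : Subgroup G, H.FG → Group.FinitelyPresented H := by
  intro H hH
  simp only [Group.finitelyPresented_iff_isFinitelyPresented] at hQ hNcoh ⊢
  have hpH : (H.map p).FG := by
    rw [← Group.fg_iff_subgroup_fg] at hH ⊢
    exact Group.fg_of_surjective (p.subgroupMap_surjective H)
  have := hQ _ hpH
  let ι : (p.subgroupMap H).ker →* N :=
    (H.subtype.comp (p.subgroupMap H).ker.subtype).codRestrict N
      fun x => hN ▸ congrArg Subtype.val x.2
  have hι : Function.Injective ι := fun x y h => by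
    ext; exact congrArg ((↑) : N → G) h
  have := Group.IsFinitelyPresented.of_injective hι hNcoh
  exact .of_ker_of_surjective _ (p.subgroupMap_surjective H)

/-- Extension inheritance for coherence, part (i), case (n,m) = (1,2):
if `p : G → Q` is a surjective group homomorphism with kernel `N`, every finitely
generated subgroup of `Q` is finitely presented, and every subgroup of `N` is finitely
presented, then every finitely generated subgroup of `G` is finitely presented. -/
theorem coherent_of_group_extension {G Q : Type*} [Group G] [Group Q]
    (p : G →* Q) (hp : Function.Surjective p) (N : Subgroup G) (hN : N = p.ker)
    (hQ : ∀ K : Subgroup Q, K.FG → Group.FinitelyPresented K)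
    (hNcoh : ∀ K : Subgroup ↥N, Group.FinitelyPresented K) :
    ∀ H : Subgroup G, H.FG → Group.FinitelyPresented H :=
  coherent_of_group_extension_general p N hN hQ hNcoh
end

section
/- Let Γ be a finite simple graph, and let Γ₁ and Γ₂ be induced subgraphs of Γ such that every vertex of Γ lies in Γ₁ or Γ₂, every edge of Γ joins two vertices of Γ₁ or two vertices of Γ₂, and let Γ₀ be the induced subgraph on the intersection of the vertex sets of Γ₁ and Γ₂. Then the right-angled Artin group A_Γ is isomorphic to the amalgamated free product A_{Γ₁} *_{A_{Γ₀}} A_{Γ₂}, the pushout of the (injective) homomorphisms A_{Γ₀} → A_{Γ₁} and A_{Γ₀} → A_{Γ₂} induced by the inclusions of induced subgraphs. -/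
universe u

/-- The relators of the right-angled Artin group of a simple graph: one commutator
relator for each pair of adjacent vertices. -/
def raagRels {V : Type u} (Γ : SimpleGraph V) : Set (FreeGroup V) :=
  { r | ∃ v w : V, Γ.Adj v w ∧
      r = FreeGroup.of v * FreeGroup.of w * (FreeGroup.of v)⁻¹ * (FreeGroup.of w)⁻¹ }

/-- The right-angled Artin group of a simple graph `Γ`: the group generated by the
vertices of `Γ`, subject only to the relations that adjacent vertices commute. -/
abbrev RAAG {V : Type u} (Γ : SimpleGraph V) : Type u :=
  PresentedGroup (raagRels Γ)

/-- The generator of a right-angled Artin group corresponding to a vertex. -/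
def RAAG.gen {V : Type u} (Γ : SimpleGraph V) (v : V) : RAAG Γ :=
  PresentedGroup.of v

/-! `A_Γ` is generated by the vertices of `Γ` subject only to commutation along edges. Since every
vertex and every edge of `Γ` lies in `Γ₁` or `Γ₂`, homomorphisms out of `A_{Γ₁}` and `A_{Γ₂}`
that agree on `A_{Γ₀}` glue to a homomorphism out of `A_Γ`, unique because the generators are
covered; this is the universal property of the pushout. The map `A_{Γ'} → A_Γ` of an induced
subgraph is injective: killing the vertices outside `Γ'` is a retraction, which respects the
relations because `Γ'` is induced. -/

open CategoryTheory

namespace RAAG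

variable {V : Type u} {W : Type*} {Γ : SimpleGraph V} {Δ : SimpleGraph W} {G : Type*} [Group G]

theorem gen_commute {v w : V} (h : Γ.Adj v w) : Commute (gen Γ v) (gen Γ w) :=
  commutatorElement_eq_one_iff_commute.mp <|
    (QuotientGroup.eq_one_iff _).mpr (Subgroup.subset_normalClosure ⟨v, w, h, rfl⟩)

def lift (f : V → G) (hf : ∀ v w, Γ.Adj v w → Commute (f v) (f w)) : RAAG Γ →* G :=
  PresentedGroup.toGroup (f := f) <| by
    rintro _ ⟨v, w, hvw, rfl⟩
    simpa only [← commutatorElement_def, map_commutatorElement, FreeGroup.lift_apply_of,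
      commutatorElement_eq_one_iff_commute] using hf v w hvw

@[simp]
theorem lift_gen (f : V → G) (hf : ∀ v w, Γ.Adj v w → Commute (f v) (f w)) (v : V) :
    lift f hf (gen Γ v) = f v :=
  PresentedGroup.toGroup.of _

@[ext]
theorem hom_ext {φ ψ : RAAG Γ →* G} (h : ∀ v, φ (gen Γ v) = ψ (gen Γ v)) : φ = ψ :=
  PresentedGroup.ext h

def map (φ : Γ →g Δ) : RAAG Γ →* RAAG Δ :=
  lift (fun v => gen Δ (φ v)) fun _ _ h => gen_commute (φ.map_adj h)

@[simp]
theorem map_gen (φ : Γ →g Δ) (v : V) : map φ (gen Γ v) = gen Δ (φ v) :=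
  lift_gen _ _ v

noncomputable def retraction (φ : Γ ↪g Δ) : RAAG Δ →* RAAG Γ :=
  lift (Function.extend φ (gen Γ) 1) fun w w' h => by
    classical
    by_cases hw : ∃ v, φ v = w
    · by_cases hw' : ∃ v', φ v' = w'
      · obtain ⟨v, rfl⟩ := hw
        obtain ⟨v', rfl⟩ := hw'
        simp only [φ.injective.extend_apply]
        exact gen_commute (φ.map_adj_iff.mp h)
      · simp [Function.extend_apply' _ _ _ hw']
    · simp [Function.extend_apply' _ _ _ hw]

theorem retraction_comp_map (φ : Γ ↪g Δ) : (retraction φ).comp (map φ.toHom) = .id _ := by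
  ext v
  simp [retraction, φ.injective.extend_apply]

theorem map_injective (φ : Γ ↪g Δ) : Function.Injective (map φ.toHom) :=
  Function.LeftInverse.injective (g := retraction φ) (DFunLike.congr_fun (retraction_comp_map φ))

section Cover

variable (Γ)

def inclusion {s t : Set V} (h : s ⊆ t) : RAAG (Γ.induce s) →* RAAG (Γ.induce t) :=
  map (Γ.induceHomOfLE h).toHom

def subtype (s : Set V) : RAAG (Γ.induce s) →* RAAG Γ :=
  map (SimpleGraph.Embedding.induce s).toHom

variable {Γ}

@[simp]
theorem inclusion_gen {s t : Set V} (h : s ⊆ t) (v : s) :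
    inclusion Γ h (gen _ v) = gen _ ⟨v, h v.2⟩ :=
  map_gen _ v

@[simp]
theorem subtype_gen (s : Set V) (v : s) : subtype Γ s (gen _ v) = gen Γ v :=
  map_gen _ v

theorem inclusion_injective {s t : Set V} (h : s ⊆ t) : Function.Injective (inclusion Γ h) :=
  map_injective _

variable {S₁ S₂ : Set V} (k₁ : RAAG (Γ.induce S₁) →* G) (k₂ : RAAG (Γ.induce S₂) →* G)

/-- The value `1` outside `S₁ ∪ S₂` is junk. -/
noncomputable def glueGen (v : V) : G :=
  open Classical in
  if h₁ : v ∈ S₁ then k₁ (gen _ ⟨v, h₁⟩) else if h₂ : v ∈ S₂ then k₂ (gen _ ⟨v, h₂⟩) else 1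

theorem glueGen_of_mem_left {v : V} (h : v ∈ S₁) : glueGen k₁ k₂ v = k₁ (gen _ ⟨v, h⟩) :=
  dif_pos h

variable {k₁ k₂}

theorem glueGen_of_mem_right
    (hk : k₁.comp (inclusion Γ Set.inter_subset_left) =
      k₂.comp (inclusion Γ Set.inter_subset_right)) {v : V} (h : v ∈ S₂) :
    glueGen k₁ k₂ v = k₂ (gen _ ⟨v, h⟩) := by
  by_cases h₁ : v ∈ S₁
  · simpa [glueGen_of_mem_left _ _ h₁] using
      DFunLike.congr_fun hk (gen (Γ.induce (S₁ ∩ S₂)) ⟨v, h₁, h⟩)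
  · simp [glueGen, h₁, h]

noncomputable def glue
    (hedges : ∀ v w : V, Γ.Adj v w → (v ∈ S₁ ∧ w ∈ S₁) ∨ (v ∈ S₂ ∧ w ∈ S₂))
    (hk : k₁.comp (inclusion Γ Set.inter_subset_left) =
      k₂.comp (inclusion Γ Set.inter_subset_right)) : RAAG Γ →* G :=
  lift (glueGen k₁ k₂) fun v w h => by
    rcases hedges v w h with ⟨hv, hw⟩ | ⟨hv, hw⟩
    · rw [glueGen_of_mem_left _ _ hv, glueGen_of_mem_left _ _ hw]
      exact (gen_commute (Γ := Γ.induce S₁) (v := ⟨v, hv⟩) (w := ⟨w, hw⟩) h).map k₁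
    · rw [glueGen_of_mem_right hk hv, glueGen_of_mem_right hk hw]
      exact (gen_commute (Γ := Γ.induce S₂) (v := ⟨v, hv⟩) (w := ⟨w, hw⟩) h).map k₂

variable (hedges : ∀ v w : V, Γ.Adj v w → (v ∈ S₁ ∧ w ∈ S₁) ∨ (v ∈ S₂ ∧ w ∈ S₂))
  (hk : k₁.comp (inclusion Γ Set.inter_subset_left) =
    k₂.comp (inclusion Γ Set.inter_subset_right))

theorem glue_comp_subtype_left : (glue hedges hk).comp (subtype Γ S₁) = k₁ := by
  ext v
  simp [glue, glueGen_of_mem_left _ _ v.2]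

theorem glue_comp_subtype_right : (glue hedges hk).comp (subtype Γ S₂) = k₂ := by
  ext v
  simp [glue, glueGen_of_mem_right hk v.2]

theorem hom_ext_of_cover (hcover : S₁ ∪ S₂ = Set.univ) {φ ψ : RAAG Γ →* G}
    (h₁ : φ.comp (subtype Γ S₁) = ψ.comp (subtype Γ S₁))
    (h₂ : φ.comp (subtype Γ S₂) = ψ.comp (subtype Γ S₂)) : φ = ψ := by
  ext v
  rcases (hcover ▸ Set.mem_univ v : v ∈ S₁ ∪ S₂) with hv | hv
  · simpa using DFunLike.congr_fun h₁ (gen _ ⟨v, hv⟩)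
  · simpa using DFunLike.congr_fun h₂ (gen _ ⟨v, hv⟩)

end Cover

theorem isPushout_of_cover {S₁ S₂ : Set V} (hcover : S₁ ∪ S₂ = Set.univ)
    (hedges : ∀ v w : V, Γ.Adj v w → (v ∈ S₁ ∧ w ∈ S₁) ∨ (v ∈ S₂ ∧ w ∈ S₂)) :
    IsPushout (GrpCat.ofHom (inclusion Γ (Set.inter_subset_left (s := S₁) (t := S₂))))
      (GrpCat.ofHom (inclusion Γ Set.inter_subset_right))
      (GrpCat.ofHom (subtype Γ S₁)) (GrpCat.ofHom (subtype Γ S₂)) := by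
  have w : CommSq (GrpCat.ofHom (inclusion Γ (Set.inter_subset_left (s := S₁) (t := S₂))))
      (GrpCat.ofHom (inclusion Γ Set.inter_subset_right))
      (GrpCat.ofHom (subtype Γ S₁)) (GrpCat.ofHom (subtype Γ S₂)) :=
    ⟨GrpCat.hom_ext (by ext; simp)⟩
  refine .of_isColimit' w <| Limits.PushoutCocone.IsColimit.mk w.w
    (fun s => GrpCat.ofHom (glue hedges (congrArg GrpCat.Hom.hom s.condition)))
    (fun s => ?_) (fun s => ?_) (fun s m h₁ h₂ => ?_)
  all_goals have hk := congrArg GrpCat.Hom.hom s.condition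
  · exact GrpCat.hom_ext (glue_comp_subtype_left hedges hk)
  · exact GrpCat.hom_ext (glue_comp_subtype_right hedges hk)
  · refine GrpCat.hom_ext (hom_ext_of_cover hcover ?_ ?_)
    · exact (congrArg GrpCat.Hom.hom h₁).trans (glue_comp_subtype_left hedges hk).symm
    · exact (congrArg GrpCat.Hom.hom h₂).trans (glue_comp_subtype_right hedges hk).symm

end RAAG

theorem raag_isPushout_of_cover_general {V : Type u} (Γ : SimpleGraph V)
    (S₁ S₂ : Set V) (hcover : S₁ ∪ S₂ = Set.univ)
    (hedges : ∀ v w : V, Γ.Adj v w → (v ∈ S₁ ∧ w ∈ S₁) ∨ (v ∈ S₂ ∧ w ∈ S₂)) :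
    ∃ (f₁ : RAAG (Γ.induce (S₁ ∩ S₂)) →* RAAG (Γ.induce S₁))
      (f₂ : RAAG (Γ.induce (S₁ ∩ S₂)) →* RAAG (Γ.induce S₂))
      (g₁ : RAAG (Γ.induce S₁) →* RAAG Γ)
      (g₂ : RAAG (Γ.induce S₂) →* RAAG Γ),
      (∀ v : ↥(S₁ ∩ S₂), f₁ (RAAG.gen _ v) = RAAG.gen _ ⟨v.1, v.2.1⟩) ∧
      (∀ v : ↥(S₁ ∩ S₂), f₂ (RAAG.gen _ v) = RAAG.gen _ ⟨v.1, v.2.2⟩) ∧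
      (∀ v : ↥S₁, g₁ (RAAG.gen _ v) = RAAG.gen Γ v.1) ∧
      (∀ v : ↥S₂, g₂ (RAAG.gen _ v) = RAAG.gen Γ v.1) ∧
      Function.Injective f₁ ∧ Function.Injective f₂ ∧
      CategoryTheory.IsPushout
        (GrpCat.ofHom f₁) (GrpCat.ofHom f₂) (GrpCat.ofHom g₁) (GrpCat.ofHom g₂) :=
  ⟨_, _, _, _, RAAG.inclusion_gen _, RAAG.inclusion_gen _, RAAG.subtype_gen _,
    RAAG.subtype_gen _, RAAG.inclusion_injective _, RAAG.inclusion_injective _,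
    RAAG.isPushout_of_cover hcover hedges⟩

/-- If a finite simple graph `Γ` is covered by two induced subgraphs `Γ₁ = Γ[S₁]` and
`Γ₂ = Γ[S₂]` (every vertex and every edge of `Γ` lies in `Γ₁` or in `Γ₂`), and
`Γ₀ = Γ[S₁ ∩ S₂]`, then the right-angled Artin group `A_Γ` is the amalgamated free
product `A_{Γ₁} *_{A_{Γ₀}} A_{Γ₂}`: the natural homomorphisms induced by the
inclusions of induced subgraphs form a pushout square in the category of groups,
and the two maps out of `A_{Γ₀}` are injective. -/
theorem raag_isPushout_of_cover {V : Type u} [Fintype V] (Γ : SimpleGraph V)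
    (S₁ S₂ : Set V) (hcover : S₁ ∪ S₂ = Set.univ)
    (hedges : ∀ v w : V, Γ.Adj v w → (v ∈ S₁ ∧ w ∈ S₁) ∨ (v ∈ S₂ ∧ w ∈ S₂)) :
    ∃ (f₁ : RAAG (Γ.induce (S₁ ∩ S₂)) →* RAAG (Γ.induce S₁))
      (f₂ : RAAG (Γ.induce (S₁ ∩ S₂)) →* RAAG (Γ.induce S₂))
      (g₁ : RAAG (Γ.induce S₁) →* RAAG Γ)
      (g₂ : RAAG (Γ.induce S₂) →* RAAG Γ),
      (∀ v : ↥(S₁ ∩ S₂), f₁ (RAAG.gen _ v) = RAAG.gen _ ⟨v.1, v.2.1⟩) ∧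
      (∀ v : ↥(S₁ ∩ S₂), f₂ (RAAG.gen _ v) = RAAG.gen _ ⟨v.1, v.2.2⟩) ∧
      (∀ v : ↥S₁, g₁ (RAAG.gen _ v) = RAAG.gen Γ v.1) ∧
      (∀ v : ↥S₂, g₂ (RAAG.gen _ v) = RAAG.gen Γ v.1) ∧
      Function.Injective f₁ ∧ Function.Injective f₂ ∧
      CategoryTheory.IsPushout
        (GrpCat.ofHom f₁) (GrpCat.ofHom f₂) (GrpCat.ofHom g₁) (GrpCat.ofHom g₂) :=
  raag_isPushout_of_cover_general Γ S₁ S₂ hcover hedges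
end
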